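/- arXiv:2407.17864 — 4 statements merged into one kernel-verified Lean document; each statement's English description precedes it below -/
import Mathlib

section
/- The Gaussian isoperimetric profile satisfies I(s) ≥ √(2/π) · (1/2 - 2(1/2 - s)^2) for all s ∈ [0,1]. -/
open Real

noncomputable def gaussPhi (x : ℝ) : ℝ := (Real.sqrt (2 * Real.pi))⁻¹ * Real.exp (-x ^ 2 / 2)

noncomputable def gaussCDF (x : ℝ) : ℝ := ∫ t in Set.Iic x, gaussPhi t

noncomputable def isoProfile (s : ℝ) : ℝ :=
  if s = 0 ∨ s = 1 then 0 else gaussPhi (Function.invFun gaussCDF s)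

open MeasureTheory Set Filter ProbabilityTheory

/-!
Write s = Φ(x). Then s - 1/2 = E(x)/√(2π) with E(x) = ∫₀ˣ e^{-t²/2} dt and I(s) = e^{-x²/2}/√(2π),
so the claim reduces to the Pólya-type bound (π/2)(1 - e^{-x²/2}) ≤ E(x)². This follows from
Feynman's identity E(x)² + 2H(x) = π/2, where H(x) = ∫₀¹ e^{-x²(1+t²)/2}/(1+t²) dt (both sides have
the same derivative and agree at 0), together with the pointwise bound H(x) ≤ (π/4) e^{-x²/2}.
-/

lemma gaussPhi_eq_gaussianPDFReal : gaussPhi = gaussianPDFReal 0 1 := by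
  ext x
  simp [gaussPhi, gaussianPDFReal]

lemma integrable_gaussPhi : Integrable gaussPhi :=
  gaussPhi_eq_gaussianPDFReal ▸ integrable_gaussianPDFReal 0 1

lemma gaussCDF_eq_cdf : gaussCDF = cdf (gaussianReal 0 1) := by
  ext x
  rw [cdf_eq_real, measureReal_def, gaussianReal_apply_eq_integral _ one_ne_zero,
    ENNReal.toReal_ofReal (integral_nonneg (gaussianPDFReal_nonneg 0 1)),
    gaussCDF, gaussPhi_eq_gaussianPDFReal]

lemma gaussCDF_zero : gaussCDF 0 = 1 / 2 := by
  have hsymm : ∫ t in Iic 0, gaussPhi t = ∫ t in Ioi 0, gaussPhi t := by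
    rw [← neg_zero, ← integral_comp_neg_Iic, neg_zero]
    simp [gaussPhi]
  have htotal := intervalIntegral.integral_Iic_add_Ioi (b := 0)
    integrable_gaussPhi.integrableOn integrable_gaussPhi.integrableOn
  rw [gaussPhi_eq_gaussianPDFReal, integral_gaussianPDFReal_eq_one 0 one_ne_zero,
    ← gaussPhi_eq_gaussianPDFReal] at htotal
  rw [gaussCDF]
  linarith

noncomputable def gaussPrimitive (x : ℝ) : ℝ := ∫ t in (0 : ℝ)..x, exp (-t ^ 2 / 2)

lemma gaussCDF_eq_half_add (x : ℝ) :
    gaussCDF x = 1 / 2 + (√(2 * π))⁻¹ * gaussPrimitive x := by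
  have h := intervalIntegral.integral_Iic_sub_Iic (a := 0) (b := x)
    integrable_gaussPhi.integrableOn integrable_gaussPhi.integrableOn
  rw [gaussPrimitive, ← intervalIntegral.integral_const_mul, ← gaussCDF_zero]
  exact eq_add_of_sub_eq' h

lemma hasDerivAt_gaussPrimitive (x : ℝ) : HasDerivAt gaussPrimitive (exp (-x ^ 2 / 2)) x := by
  have hcont : Continuous fun t : ℝ ↦ exp (-t ^ 2 / 2) := by fun_prop
  exact intervalIntegral.integral_hasDerivAt_right (hcont.intervalIntegrable _ _)
    (hcont.stronglyMeasurableAtFilter _ _) hcont.continuousAt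

lemma continuous_gaussCDF : Continuous gaussCDF := by
  rw [funext gaussCDF_eq_half_add]
  exact continuous_const.add (continuous_const.mul
    (continuous_iff_continuousAt.2 fun x ↦ (hasDerivAt_gaussPrimitive x).continuousAt))

lemma Ioo_subset_range_gaussCDF : Ioo 0 1 ⊆ range gaussCDF := by
  rintro s ⟨hs0, hs1⟩
  obtain ⟨a, ha⟩ :=
    ((gaussCDF_eq_cdf ▸ tendsto_cdf_atBot _).eventually (eventually_lt_nhds hs0)).exists
  obtain ⟨b, hb⟩ :=
    ((gaussCDF_eq_cdf ▸ tendsto_cdf_atTop _).eventually (eventually_gt_nhds hs1)).exists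
  exact intermediate_value_univ a b continuous_gaussCDF ⟨ha.le, hb.le⟩

noncomputable def gaussFeynman (y : ℝ) : ℝ :=
  ∫ t in (0 : ℝ)..1, exp (-(y ^ 2 * (1 + t ^ 2)) / 2) / (1 + t ^ 2)

lemma continuous_gaussFeynman_integrand (y : ℝ) :
    Continuous fun t : ℝ ↦ exp (-(y ^ 2 * (1 + t ^ 2)) / 2) / (1 + t ^ 2) := by
  fun_prop (disch := intro t; positivity)

lemma hasDerivAt_gaussFeynman_integrand (t y : ℝ) :
    HasDerivAt (fun y ↦ exp (-(y ^ 2 * (1 + t ^ 2)) / 2) / (1 + t ^ 2))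
      (-y * exp (-(y ^ 2 * (1 + t ^ 2)) / 2)) y := by
  have h := ((((hasDerivAt_pow 2 y).mul_const (1 + t ^ 2)).fun_neg.div_const 2).exp.div_const
    (1 + t ^ 2))
  refine h.congr_deriv ?_
  have : (1 : ℝ) + t ^ 2 ≠ 0 := by positivity
  field_simp
  norm_num
  ring

lemma integral_neg_mul_exp_eq_neg_exp_mul_gaussPrimitive (y : ℝ) :
    ∫ t in (0 : ℝ)..1, -y * exp (-(y ^ 2 * (1 + t ^ 2)) / 2)
      = -(exp (-y ^ 2 / 2) * gaussPrimitive y) := by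
  have hsplit : ∀ t : ℝ, -y * exp (-(y ^ 2 * (1 + t ^ 2)) / 2)
      = -exp (-y ^ 2 / 2) * (y * exp (-(y * t) ^ 2 / 2)) := by
    intro t
    rw [neg_mul, neg_mul, mul_left_comm, ← exp_add]
    ring_nf
  have hscale := intervalIntegral.smul_integral_comp_mul_left
    (fun u ↦ exp (-u ^ 2 / 2)) y (a := 0) (b := 1)
  simp only [smul_eq_mul, mul_zero, mul_one] at hscale
  simp only [hsplit, intervalIntegral.integral_const_mul, hscale, gaussPrimitive]
  ring

lemma hasDerivAt_gaussFeynman (y : ℝ) :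
    HasDerivAt gaussFeynman (-(exp (-y ^ 2 / 2) * gaussPrimitive y)) y := by
  rw [← integral_neg_mul_exp_eq_neg_exp_mul_gaussPrimitive]
  refine (intervalIntegral.hasDerivAt_integral_of_dominated_loc_of_deriv_le
    (bound := fun _ ↦ |y| + 1) (Metric.ball_mem_nhds y one_pos)
    (Eventually.of_forall fun x ↦ (continuous_gaussFeynman_integrand x).aestronglyMeasurable)
    ((continuous_gaussFeynman_integrand y).intervalIntegrable _ _)
    (by fun_prop :
      Continuous fun t : ℝ ↦ -y * exp (-(y ^ 2 * (1 + t ^ 2)) / 2)).aestronglyMeasurable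
    (Eventually.of_forall fun t _ x hx ↦ ?_) intervalIntegrable_const
    (Eventually.of_forall fun t _ x _ ↦ hasDerivAt_gaussFeynman_integrand t x)).2
  have hx : |x| ≤ |y| + 1 := by
    have := abs_sub_abs_le_abs_sub x y
    rw [Metric.mem_ball, dist_eq] at hx
    linarith
  have hexp : exp (-(x ^ 2 * (1 + t ^ 2)) / 2) ≤ 1 :=
    exp_le_one_iff.2 (by nlinarith [sq_nonneg x, sq_nonneg t])
  rw [norm_mul, norm_neg, norm_eq_abs, norm_eq_abs, abs_exp]
  nlinarith [abs_nonneg x, exp_pos (-(x ^ 2 * (1 + t ^ 2)) / 2)]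

lemma gaussFeynman_zero : gaussFeynman 0 = π / 4 := by
  simp [gaussFeynman, one_div]

lemma gaussPrimitive_sq_add_two_mul_gaussFeynman (x : ℝ) :
    gaussPrimitive x ^ 2 + 2 * gaussFeynman x = π / 2 := by
  have hderiv (y : ℝ) : HasDerivAt (fun y ↦ gaussPrimitive y ^ 2 + 2 * gaussFeynman y) 0 y := by
    refine (((hasDerivAt_gaussPrimitive y).fun_pow 2).fun_add
      ((hasDerivAt_gaussFeynman y).const_mul 2)).congr_deriv ?_
    norm_num
    ring
  rw [is_const_of_deriv_eq_zero (fun y ↦ (hderiv y).differentiableAt) (fun y ↦ (hderiv y).deriv)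
    x 0, gaussFeynman_zero]
  simp [gaussPrimitive]
  ring

lemma gaussFeynman_le (y : ℝ) : gaussFeynman y ≤ π / 4 * exp (-y ^ 2 / 2) := by
  have hmono : gaussFeynman y ≤ ∫ t in (0 : ℝ)..1, exp (-y ^ 2 / 2) * (1 / (1 + t ^ 2)) := by
    refine intervalIntegral.integral_mono_on zero_le_one
      ((continuous_gaussFeynman_integrand y).intervalIntegrable _ _)
      ((by fun_prop (disch := intro t; positivity) :
        Continuous fun t : ℝ ↦ exp (-y ^ 2 / 2) * (1 / (1 + t ^ 2))).intervalIntegrable _ _)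
      fun t _ ↦ ?_
    rw [div_eq_mul_one_div]
    gcongr
    nlinarith [sq_nonneg (y * t)]
  rw [intervalIntegral.integral_const_mul, integral_one_div_one_add_sq] at hmono
  simpa [mul_comm] using hmono

lemma pi_div_two_mul_one_sub_exp_le_gaussPrimitive_sq (x : ℝ) :
    π / 2 * (1 - exp (-x ^ 2 / 2)) ≤ gaussPrimitive x ^ 2 := by
  linarith [gaussPrimitive_sq_add_two_mul_gaussFeynman x, gaussFeynman_le x]

lemma sqrt_two_div_pi_mul_le_gaussPhi (x : ℝ) :
    √(2 / π) * (1 / 2 - 2 * (1 / 2 - gaussCDF x) ^ 2) ≤ gaussPhi x := by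
  have hsqrt : √(2 / π) = 2 * (√(2 * π))⁻¹ := by
    rw [← sqrt_inv, show (2 : ℝ) / π = (2 * π)⁻¹ * 2 ^ 2 by field_simp, sqrt_mul (by positivity),
      sqrt_sq zero_le_two, mul_comm]
  have hsq : ((√(2 * π))⁻¹) ^ 2 = (2 * π)⁻¹ := by
    rw [inv_pow, sq_sqrt (by positivity)]
  have hpolya := pi_div_two_mul_one_sub_exp_le_gaussPrimitive_sq x
  rw [gaussCDF_eq_half_add, gaussPhi, hsqrt]
  set c := (√(2 * π))⁻¹
  set E := gaussPrimitive x
  calc 2 * c * (1 / 2 - 2 * (1 / 2 - (1 / 2 + c * E)) ^ 2)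
      = c * (1 - 2 / π * E ^ 2) := by
        linear_combination (-4 * c * E ^ 2) * hsq
    _ ≤ c * exp (-x ^ 2 / 2) := by
        gcongr
        rw [div_mul_eq_mul_div, sub_le_comm, le_div_iff₀ pi_pos]
        linarith

theorem stmt1 (s : ℝ) (hs : s ∈ Set.Icc (0:ℝ) 1) :
    Real.sqrt (2 / Real.pi) * (1/2 - 2 * (1/2 - s)^2) ≤ isoProfile s := by
  by_cases hend : s = 0 ∨ s = 1
  · rcases hend with rfl | rfl <;> norm_num [isoProfile]
  have hinterior : s ∈ Ioo 0 1 := by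
    obtain ⟨hs0, hs1⟩ := not_or.1 hend
    exact ⟨hs.1.lt_of_ne' hs0, hs.2.lt_of_ne hs1⟩
  rw [isoProfile, if_neg hend]
  have hbound := sqrt_two_div_pi_mul_le_gaussPhi (Function.invFun gaussCDF s)
  rwa [Function.invFun_eq (Ioo_subset_range_gaussCDF hinterior)] at hbound
end

section
/- For every p ∈ (0,1) and s ∈ [-1,1], writing q = 1-p, one has p(1+s)² log((1+s)²) + q(1-s)² log((1-s)²) - (p(1+s)² + q(1-s)²) log(p(1+s)² + q(1-s)²) ≤ 2s². -/
/-!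
With `a = (1+s)^2`, `b = (1-s)^2` and `m = p a + (1-p) b`, the left-hand side is
`p a log (a/m) + (1-p) b log (b/m)`. We bound `log (1+u)` at `1+u = a/m, b/m` by
`u - u^2/2 + u^3/(3+2u)`, which holds for all `u > -1` because the difference has derivative
`u^3 / ((1+u)(3+2u)^2)`; the cruder bounds `u` and `u - u^2/2 + u^3/3` are too weak.
After clearing denominators, `2 s^2` minus the resulting rational bound is
`s^2 Q(2p-1, s) / (m^2 (m+2a) (m+2b))` for an explicit polynomial `Q` of degree 8,
and `Q ≥ 0` on `[-1,1]^2`.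
-/

open Real Set

lemma hasDerivAt_pade_sub_log {y : ℝ} (hy : -1 < y) :
    HasDerivAt (fun y => y - y ^ 2 / 2 + y ^ 3 / (3 + 2 * y) - log (1 + y))
      (y ^ 3 / ((1 + y) * (3 + 2 * y) ^ 2)) y := by
  have h1y : 1 + y ≠ 0 := by linarith
  have h32y : 3 + 2 * y ≠ 0 := by linarith
  have hlog : HasDerivAt (fun y => log (1 + y)) (1 / (1 + y)) y := by
    simpa using ((hasDerivAt_id y).const_add 1).log h1y
  have hden : HasDerivAt (fun y => 3 + 2 * y) 2 y := by
    simpa using ((hasDerivAt_id y).const_mul 2).const_add 3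
  refine ((((hasDerivAt_id' y).fun_sub ((hasDerivAt_pow 2 y).div_const 2)).fun_add
    ((hasDerivAt_pow 3 y).fun_div hden h32y)).fun_sub hlog).congr_deriv ?_
  field_simp
  ring

lemma log_one_add_le_pade {x : ℝ} (hx : -1 < x) :
    log (1 + x) ≤ x - x ^ 2 / 2 + x ^ 3 / (3 + 2 * x) := by
  set g := fun y : ℝ => y - y ^ 2 / 2 + y ^ 3 / (3 + 2 * y) - log (1 + y)
  have hg' : ∀ y ∈ Ioi (-1 : ℝ), HasDerivAt g (y ^ 3 / ((1 + y) * (3 + 2 * y) ^ 2)) y :=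
    fun y hy => hasDerivAt_pade_sub_log hy
  have hg : ContinuousOn g (Ioi (-1)) := fun y hy => (hg' y hy).continuousAt.continuousWithinAt
  suffices g 0 ≤ g x by simpa [g] using this
  rcases le_total 0 x with hx0 | hx0
  · refine monotoneOn_of_hasDerivWithinAt_nonneg (convex_Ici 0)
      (hg.mono (Ici_subset_Ioi.2 (by norm_num)))
      (fun y hy => (hg' y ?_).hasDerivWithinAt) (fun y hy => ?_) self_mem_Ici hx0 hx0
    all_goals rw [interior_Ici, mem_Ioi] at hy
    · simp only [mem_Ioi]; linarith
    · have : 0 < 1 + y := by linarith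
      positivity
  · refine antitoneOn_of_hasDerivWithinAt_nonpos (convex_Ioc (-1) 0) (hg.mono Ioc_subset_Ioi_self)
      (fun y hy => (hg' y ?_).hasDerivWithinAt) (fun y hy => ?_) ⟨hx, hx0⟩
      (right_mem_Ioc.2 (by norm_num)) hx0
    all_goals rw [interior_Ioc, mem_Ioo] at hy
    · exact hy.1
    · have : 0 < 1 + y := by linarith
      exact div_nonpos_of_nonpos_of_nonneg (Odd.pow_nonpos (by decide) hy.2.le) (by positivity)

/-- `X (u - u^2/2 + u^3/(3+2u))` at `u = X/m - 1`. -/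
noncomputable def padeMajorant (X m : ℝ) : ℝ :=
  X * (X - m) / m - X * (X - m) ^ 2 / (2 * m ^ 2) + X * (X - m) ^ 3 / (m ^ 2 * (m + 2 * X))

lemma mul_log_sub_mul_log_le_padeMajorant {X m : ℝ} (hX : 0 ≤ X) (hm : 0 < m) :
    X * log X - X * log m ≤ padeMajorant X m := by
  rcases hX.eq_or_lt with rfl | hX
  · simp [padeMajorant]
  have h := log_one_add_le_pade (x := X / m - 1) (by linarith [div_pos hX hm])
  rw [add_sub_cancel, log_div hX.ne' hm.ne'] at h
  calc X * log X - X * log m = X * (log X - log m) := by ring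
    _ ≤ X * ((X / m - 1) - (X / m - 1) ^ 2 / 2 + (X / m - 1) ^ 3 / (3 + 2 * (X / m - 1))) :=
      mul_le_mul_of_nonneg_left h hX.le
    _ = padeMajorant X m := by
      have : 3 + 2 * (X / m - 1) = (m + 2 * X) / m := by field_simp; ring
      rw [this, padeMajorant]
      field_simp

def slackPoly (t s : ℝ) : ℝ :=
  2 * s ^ 2 + 12 * t * s + 18 * t ^ 2
    + 6 * s ^ 4 + 24 * t * s ^ 3 + 78 * t ^ 2 * s ^ 2 + 84 * t ^ 3 * s
    + 22 * s ^ 6 + 76 * t * s ^ 5 + 126 * t ^ 2 * s ^ 4 + 184 * t ^ 3 * s ^ 3 + 136 * t ^ 4 * s ^ 2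
    + 18 * s ^ 8 + 96 * t * s ^ 7 + 194 * t ^ 2 * s ^ 6 + 212 * t ^ 3 * s ^ 5
    + 168 * t ^ 4 * s ^ 4 + 80 * t ^ 5 * s ^ 3

lemma slackPoly_neg_neg (t s : ℝ) : slackPoly (-t) (-s) = slackPoly t s := by
  unfold slackPoly; ring

lemma slackPoly_nonneg_of_mul_nonneg {t s : ℝ} (hts : 0 ≤ t * s) : 0 ≤ slackPoly t s := by
  have h : slackPoly t s = 2 * s ^ 2 + 18 * t ^ 2 + 6 * s ^ 4 + 78 * t ^ 2 * s ^ 2 + 22 * s ^ 6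
      + 126 * t ^ 2 * s ^ 4 + 136 * t ^ 4 * s ^ 2 + 18 * s ^ 8 + 194 * t ^ 2 * s ^ 6
      + 168 * t ^ 4 * s ^ 4 + t * s * (12 + 24 * s ^ 2 + 84 * t ^ 2 + 76 * s ^ 4
        + 184 * t ^ 2 * s ^ 2 + 96 * s ^ 6 + 212 * t ^ 2 * s ^ 4 + 80 * t ^ 4 * s ^ 2) := by
    unfold slackPoly; ring
  rw [h]
  exact add_nonneg (by positivity) (mul_nonneg hts (by positivity))

lemma slackPoly_neg_nonneg {r s : ℝ} (hr : 0 ≤ r) (hr' : r ≤ 1) (hs : 0 ≤ s)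
    (hs' : s ≤ 1) : 0 ≤ slackPoly (-r) s := by
  -- A Positivstellensatz certificate in the nonnegative quantities `(s - k r)^2`, `r`, `s`,
  -- `1 - r`, `1 - s`.
  have hr1 : 0 ≤ 1 - r := by linarith
  have hs1 : 0 ≤ 1 - s := by linarith
  have h1 := sq_nonneg (s - r)
  have h2 := sq_nonneg (s - 2 * r)
  have h3 := sq_nonneg (s - 3 * r)
  have h4 := sq_nonneg (s - 4 * r)
  unfold slackPoly
  linarith [mul_nonneg (mul_nonneg h2 (pow_nonneg hs 2)) (pow_nonneg hr1 5),
    mul_nonneg (mul_nonneg h2 (pow_nonneg hs 2)) (pow_nonneg hs1 6),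
    mul_nonneg (mul_nonneg h2 (pow_nonneg hs 4)) (pow_nonneg hr1 3),
    mul_nonneg h3 (pow_nonneg hr1 3),
    mul_nonneg (mul_nonneg h3 (pow_nonneg hr1 2)) (pow_nonneg hs1 2),
    mul_nonneg h3 (pow_nonneg hs1 7),
    mul_nonneg (mul_nonneg h3 hr) (pow_nonneg hr1 4),
    mul_nonneg (mul_nonneg h3 hr) (pow_nonneg hr1 6),
    mul_nonneg (mul_nonneg h3 hr) (pow_nonneg hs1 7),
    mul_nonneg (mul_nonneg h3 hs) (pow_nonneg hr1 7),
    mul_nonneg (mul_nonneg (mul_nonneg h3 hs) (pow_nonneg hr1 6)) hs1,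
    mul_nonneg (mul_nonneg h3 hs) (pow_nonneg hs1 6),
    mul_nonneg (mul_nonneg h4 (pow_nonneg hr 2)) (pow_nonneg hr1 3),
    mul_nonneg (mul_nonneg h4 (pow_nonneg hr 2)) (pow_nonneg hr1 6),
    mul_nonneg (mul_nonneg (mul_nonneg h4 (pow_nonneg hr 2)) (pow_nonneg hr1 4)) (pow_nonneg hs1 2),
    mul_nonneg (mul_nonneg (mul_nonneg h4 (pow_nonneg hr 2)) (pow_nonneg hr1 3)) (pow_nonneg hs1 2),
    mul_nonneg (mul_nonneg (mul_nonneg h4 (pow_nonneg hr 2)) (pow_nonneg hr1 2)) (pow_nonneg hs1 2),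
    mul_nonneg (mul_nonneg (mul_nonneg h4 (pow_nonneg hr 2)) hr1) (pow_nonneg hs1 4),
    mul_nonneg (mul_nonneg h4 (pow_nonneg hr 2)) (pow_nonneg hs1 6),
    mul_nonneg (mul_nonneg (mul_nonneg h4 (pow_nonneg hr 3)) hr1) (pow_nonneg hs1 4),
    mul_nonneg (mul_nonneg (mul_nonneg h4 (pow_nonneg hr 4)) (pow_nonneg hr1 3)) hs1,
    mul_nonneg (mul_nonneg h4 (pow_nonneg hr 5)) (pow_nonneg hr1 3),
    mul_nonneg (mul_nonneg (mul_nonneg h4 (pow_nonneg hr 3)) (pow_nonneg hs 2)) (pow_nonneg hr1 3),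
    mul_nonneg (mul_nonneg (mul_nonneg (mul_nonneg h4 (pow_nonneg hr 2)) hs) (pow_nonneg hr1 3))
      (pow_nonneg hs1 2),
    mul_nonneg (mul_nonneg (mul_nonneg (mul_nonneg h4 (pow_nonneg hr 2)) hs) hr1)
      (pow_nonneg hs1 4),
    mul_nonneg (mul_nonneg (mul_nonneg (mul_nonneg h4 (pow_nonneg hr 2)) (pow_nonneg hs 2))
      (pow_nonneg hr1 2)) (pow_nonneg hs1 2),
    mul_nonneg (mul_nonneg (mul_nonneg h4 hr) hs) (pow_nonneg hs1 6),
    mul_nonneg (mul_nonneg (mul_nonneg (mul_nonneg h4 hr) (pow_nonneg hs 2)) hr1)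
      (pow_nonneg hs1 4),
    mul_nonneg (mul_nonneg (mul_nonneg (mul_nonneg h4 hr) (pow_nonneg hs 3)) (pow_nonneg hr1 2))
      (pow_nonneg hs1 2),
    mul_nonneg (mul_nonneg (mul_nonneg h4 hr) (pow_nonneg hs 4)) (pow_nonneg hr1 3),
    mul_nonneg (mul_nonneg h4 (pow_nonneg hs 2)) (pow_nonneg hr1 4),
    mul_nonneg (mul_nonneg h4 (pow_nonneg hs 2)) (pow_nonneg hs1 6),
    mul_nonneg (mul_nonneg h4 (pow_nonneg hs 3)) (pow_nonneg hr1 3),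
    mul_nonneg (mul_nonneg (mul_nonneg h4 (pow_nonneg hs 3)) hr1) (pow_nonneg hs1 4),
    mul_nonneg (mul_nonneg (mul_nonneg h4 (pow_nonneg hs 4)) (pow_nonneg hr1 2)) (pow_nonneg hs1 2),
    mul_nonneg (mul_nonneg h4 (pow_nonneg hs 5)) (pow_nonneg hr1 3),
    mul_nonneg (mul_nonneg (mul_nonneg h1 hr) (pow_nonneg hs 3)) (pow_nonneg hs1 4),
    mul_nonneg (mul_nonneg (mul_nonneg (mul_nonneg h1 hr) (pow_nonneg hs 4)) hr1)
      (pow_nonneg hs1 2),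
    mul_nonneg (mul_nonneg (mul_nonneg h1 hr) (pow_nonneg hs 5)) (pow_nonneg hr1 2),
    mul_nonneg (mul_nonneg (mul_nonneg h1 (pow_nonneg hs 2)) hr1) (pow_nonneg hs1 2),
    mul_nonneg (mul_nonneg h1 (pow_nonneg hs 3)) (pow_nonneg hs1 5),
    mul_nonneg (mul_nonneg (mul_nonneg h1 (pow_nonneg hs 4)) hr1) (pow_nonneg hs1 2),
    mul_nonneg (mul_nonneg (mul_nonneg h1 (pow_nonneg hs 4)) hr1) (pow_nonneg hs1 3),
    mul_nonneg (mul_nonneg h1 (pow_nonneg hs 6)) (pow_nonneg hr1 2),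
    mul_nonneg (mul_nonneg (pow_nonneg hs 4) hr1) (pow_nonneg hs1 5),
    mul_nonneg (mul_nonneg (pow_nonneg hs 5) hr1) (pow_nonneg hs1 4),
    mul_nonneg (pow_nonneg hs 6) (pow_nonneg hr1 4)]

lemma slackPoly_nonneg {t s : ℝ} (ht : t ∈ Icc (-1) 1) (hs : s ∈ Icc (-1) 1) :
    0 ≤ slackPoly t s := by
  obtain ⟨ht0, ht1⟩ := ht
  obtain ⟨hs0, hs1⟩ := hs
  rcases le_or_gt 0 (t * s) with hts | hts
  · exact slackPoly_nonneg_of_mul_nonneg hts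
  rcases mul_neg_iff.1 hts with ⟨ht, hs⟩ | ⟨ht, hs⟩
  · rw [← slackPoly_neg_neg]
    exact slackPoly_neg_nonneg ht.le ht1 (by linarith) (by linarith)
  · simpa using slackPoly_neg_nonneg (r := -t) (by linarith) (by linarith) hs.le hs1

lemma mul_sq_add_mul_sq_pos {p s : ℝ} (hp : p ∈ Ioo (0 : ℝ) 1) :
    0 < p * (1 + s) ^ 2 + (1 - p) * (1 - s) ^ 2 := by
  have h : p * (1 + s) ^ 2 + (1 - p) * (1 - s) ^ 2 = (s + (2 * p - 1)) ^ 2 + 4 * p * (1 - p) := by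
    ring
  rw [h]
  have := hp.1; have := sub_pos.2 hp.2
  positivity

lemma two_mul_sq_sub_padeMajorant {p s m : ℝ} (hm : 0 < m)
    (hm_eq : m = p * (1 + s) ^ 2 + (1 - p) * (1 - s) ^ 2) :
    2 * s ^ 2 - (p * padeMajorant ((1 + s) ^ 2) m + (1 - p) * padeMajorant ((1 - s) ^ 2) m) =
      s ^ 2 * slackPoly (2 * p - 1) s /
        (m ^ 2 * (m + 2 * (1 + s) ^ 2) * (m + 2 * (1 - s) ^ 2)) := by
  have h1 : 0 < m + 2 * (1 + s) ^ 2 := by positivity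
  have h2 : 0 < m + 2 * (1 - s) ^ 2 := by positivity
  unfold padeMajorant slackPoly
  field_simp
  subst hm_eq
  ring

lemma padeMajorant_combination_le {p s m : ℝ} (hp : p ∈ Ioo (0 : ℝ) 1)
    (hs : s ∈ Icc (-1 : ℝ) 1)
    (hm_eq : m = p * (1 + s) ^ 2 + (1 - p) * (1 - s) ^ 2) :
    p * padeMajorant ((1 + s) ^ 2) m + (1 - p) * padeMajorant ((1 - s) ^ 2) m ≤ 2 * s ^ 2 := by
  have hm : 0 < m := hm_eq ▸ mul_sq_add_mul_sq_pos hp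
  have ht : 2 * p - 1 ∈ Icc (-1 : ℝ) 1 := ⟨by linarith [hp.1], by linarith [hp.2]⟩
  have hslack : 0 ≤ s ^ 2 * slackPoly (2 * p - 1) s /
      (m ^ 2 * (m + 2 * (1 + s) ^ 2) * (m + 2 * (1 - s) ^ 2)) := by
    have := slackPoly_nonneg ht hs
    positivity
  linarith [two_mul_sq_sub_padeMajorant hm hm_eq]

theorem stmt5 (p s : ℝ) (hp : p ∈ Set.Ioo (0:ℝ) 1) (hs : s ∈ Set.Icc (-1:ℝ) 1) :
    p * (1+s)^2 * Real.log ((1+s)^2) + (1-p) * (1-s)^2 * Real.log ((1-s)^2)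
      - (p * (1+s)^2 + (1-p) * (1-s)^2) * Real.log (p * (1+s)^2 + (1-p) * (1-s)^2)
      ≤ 2 * s^2 := by
  set m := p * (1 + s) ^ 2 + (1 - p) * (1 - s) ^ 2 with hm_eq
  have hm : 0 < m := mul_sq_add_mul_sq_pos hp
  calc p * (1 + s) ^ 2 * log ((1 + s) ^ 2) + (1 - p) * (1 - s) ^ 2 * log ((1 - s) ^ 2) - m * log m
        = p * ((1 + s) ^ 2 * log ((1 + s) ^ 2) - (1 + s) ^ 2 * log m)
          + (1 - p) * ((1 - s) ^ 2 * log ((1 - s) ^ 2) - (1 - s) ^ 2 * log m) := by ring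
    _ ≤ p * padeMajorant ((1 + s) ^ 2) m + (1 - p) * padeMajorant ((1 - s) ^ 2) m :=
      add_le_add
        (mul_le_mul_of_nonneg_left (mul_log_sub_mul_log_le_padeMajorant (sq_nonneg _) hm) hp.1.le)
        (mul_le_mul_of_nonneg_left (mul_log_sub_mul_log_le_padeMajorant (sq_nonneg _) hm)
          (sub_nonneg.2 hp.2.le))
    _ ≤ 2 * s ^ 2 := padeMajorant_combination_le hp hs hm_eq
end

section
/- For every p ∈ (0,1), the two-point space {-1,1} with measure μ_p = p δ_1 + (1-p) δ_{-1} satisfies the logarithmic Sobolev inequality: for all nonnegative f : {-1,1} → ℝ, μ_p(f² log f²) - μ_p(f²) log μ_p(f²) ≤ -(1/(2p(1-p))) μ_p(f L f), where L f = μ_p(f) - f. -/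
open Real

noncomputable def twoPtExp (p : ℝ) (g : Bool → ℝ) : ℝ := p * g true + (1 - p) * g false

noncomputable def twoPtL (p : ℝ) (g : Bool → ℝ) (x : Bool) : ℝ := twoPtExp p g - g x

/-! Fix `b ≥ 0` and regard `(a - b)² / 2 - Ent_p(a², b²)` as a function of `a`. It vanishes at
`a = b` and is nondecreasing on `[b, ∞)`: with `m = p a² + q b²`, its derivative
`(a - b) - 2 p a log (a² / m)` is nonnegative because `log v ≤ (v - 1) / √v` for `v ≥ 1` and
`2 p q (a + b) ≤ √m`. Exchanging `p` and `q` covers `a < b`, and passing to `|a|, |b|` removes the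
signs. Since `-μ_p(f L f) = p q (f(1) - f(-1))²`, the right-hand side is `(f(1) - f(-1))² / 2`. -/

-- `μ_p(g log g) - μ_p(g) log μ_p(g)` for `g` taking the value `a` at `1` and `b` at `-1`.
noncomputable def twoPtEntropy (p a b : ℝ) : ℝ :=
  p * (a * log a) + (1 - p) * (b * log b) - (p * a + (1 - p) * b) * log (p * a + (1 - p) * b)

theorem twoPtEntropy_self (p a : ℝ) : twoPtEntropy p a a = 0 := by
  rw [twoPtEntropy, show p * a + (1 - p) * a = a by ring]
  ring

theorem twoPtEntropy_one_sub (p a b : ℝ) : twoPtEntropy (1 - p) b a = twoPtEntropy p a b := by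
  rw [twoPtEntropy, twoPtEntropy, sub_sub_cancel]
  ring_nf

theorem log_le_sub_one_div_sqrt {v : ℝ} (hv : 1 ≤ v) : log v ≤ (v - 1) / √v := by
  have hs : 0 < √v := sqrt_pos.2 (by linarith)
  have h := self_le_sinh_iff.2 (log_nonneg (one_le_sqrt.2 hv))
  rw [sinh_log hs] at h
  calc log v = 2 * log √v := by rw [log_sqrt (by linarith)]; ring
    _ ≤ √v - (√v)⁻¹ := by linarith
    _ = (v - 1) / √v := by field_simp; rw [sq_sqrt (by linarith)]

theorem two_mul_mul_one_sub_mul_add_le_sqrt {p : ℝ} (hp0 : 0 ≤ p) (hp1 : p ≤ 1) (x b : ℝ) :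
    2 * p * (1 - p) * (x + b) ≤ √(p * x ^ 2 + (1 - p) * b ^ 2) := by
  apply le_sqrt_of_sq_le
  have hpq : 0 ≤ p * (1 - p) := mul_nonneg hp0 (by linarith)
  have h4 : 4 * (p * (1 - p)) ≤ 1 := by nlinarith [sq_nonneg (2 * p - 1)]
  -- `p x² + q b² - p q (x + b)² = (p x - q b)²` when `p + q = 1`
  have hcs : p * (1 - p) * (x + b) ^ 2 ≤ p * x ^ 2 + (1 - p) * b ^ 2 := by
    nlinarith [sq_nonneg (p * x - (1 - p) * b)]
  calc (2 * p * (1 - p) * (x + b)) ^ 2 = 4 * (p * (1 - p)) * (p * (1 - p) * (x + b) ^ 2) := by ring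
    _ ≤ 1 * (p * (1 - p) * (x + b) ^ 2) := by gcongr
    _ ≤ _ := by linarith

theorem hasDerivAt_twoPtEntropy_sq (p b : ℝ) {x : ℝ} (hx : x ≠ 0)
    (hm : p * x ^ 2 + (1 - p) * b ^ 2 ≠ 0) :
    HasDerivAt (fun y => twoPtEntropy p (y ^ 2) (b ^ 2))
      (2 * p * x * (log (x ^ 2) - log (p * x ^ 2 + (1 - p) * b ^ 2))) x := by
  have hsq : HasDerivAt (fun y : ℝ => y ^ 2) (2 * x) x := by simpa using hasDerivAt_pow 2 x
  have h1 : HasDerivAt (fun y => y ^ 2 * log (y ^ 2)) ((log (x ^ 2) + 1) * (2 * x)) x :=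
    (hasDerivAt_mul_log (pow_ne_zero 2 hx)).comp (h := fun y => y ^ 2) x hsq
  have h2 : HasDerivAt (fun y => (p * y ^ 2 + (1 - p) * b ^ 2) * log (p * y ^ 2 + (1 - p) * b ^ 2))
      ((log (p * x ^ 2 + (1 - p) * b ^ 2) + 1) * (p * (2 * x))) x :=
    (hasDerivAt_mul_log hm).comp (h := fun y => p * y ^ 2 + (1 - p) * b ^ 2) x
      ((hsq.const_mul p).add_const ((1 - p) * b ^ 2))
  exact (((h1.const_mul p).add_const ((1 - p) * (b ^ 2 * log (b ^ 2)))).sub h2).congr_deriv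
    (by ring)

theorem two_mul_mul_log_sub_log_le {p b x : ℝ} (hp0 : 0 < p) (hp1 : p ≤ 1) (hb : 0 ≤ b)
    (hbx : b < x) :
    2 * p * x * (log (x ^ 2) - log (p * x ^ 2 + (1 - p) * b ^ 2)) ≤ x - b := by
  have hx : 0 < x := hb.trans_lt hbx
  set m := p * x ^ 2 + (1 - p) * b ^ 2
  have hm0 : 0 < m := by positivity
  have hmx : m ≤ x ^ 2 := by
    nlinarith [mul_nonneg (sub_nonneg.2 hp1)
      (mul_nonneg (sub_nonneg.2 hbx.le) (add_nonneg hx.le hb))]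
  have hs0 : 0 < √m := sqrt_pos.2 hm0
  have hlog : log (x ^ 2) - log m ≤ (x ^ 2 - m) / (x * √m) := by
    rw [← log_div (by positivity) hm0.ne']
    convert log_le_sub_one_div_sqrt ((one_le_div hm0).2 hmx) using 1
    rw [sqrt_div' _ hm0.le, sqrt_sq hx.le]
    field_simp
    rw [sq_sqrt hm0.le]
    ring
  calc 2 * p * x * (log (x ^ 2) - log m) ≤ 2 * p * x * ((x ^ 2 - m) / (x * √m)) := by gcongr
    _ = (x - b) * (2 * p * (1 - p) * (x + b) / √m) := by field_simp; ring
    _ ≤ (x - b) * 1 := mul_le_mul_of_nonneg_left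
      ((div_le_one hs0).2 (two_mul_mul_one_sub_mul_add_le_sqrt hp0.le hp1 x b)) (by linarith)
    _ = x - b := mul_one _

theorem twoPtEntropy_sq_le_of_le {p a b : ℝ} (hp0 : 0 < p) (hp1 : p ≤ 1) (hb : 0 ≤ b)
    (hba : b ≤ a) : twoPtEntropy p (a ^ 2) (b ^ 2) ≤ (a - b) ^ 2 / 2 := by
  let g : ℝ → ℝ := fun x => (x - b) ^ 2 / 2 - twoPtEntropy p (x ^ 2) (b ^ 2)
  have hcont : Continuous g := by unfold g twoPtEntropy; fun_prop
  have hg : MonotoneOn g (Set.Ici b) := by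
    refine monotoneOn_of_hasDerivWithinAt_nonneg (convex_Ici b)
      (f' := fun x => (x - b) - 2 * p * x * (log (x ^ 2) - log (p * x ^ 2 + (1 - p) * b ^ 2)))
      hcont.continuousOn (fun x hx => ?_) (fun x hx => ?_)
    all_goals rw [interior_Ici] at hx
    · have hx0 : 0 < x := hb.trans_lt hx
      have hd := hasDerivAt_twoPtEntropy_sq p b hx0.ne' (by positivity)
      have hsq : HasDerivAt (fun y : ℝ => (y - b) ^ 2 / 2) (x - b) x :=
        ((((hasDerivAt_id x).sub_const b).pow 2).div_const 2).congr_deriv (by simp)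
      exact (hsq.sub hd).hasDerivWithinAt
    · exact sub_nonneg.2 (two_mul_mul_log_sub_log_le hp0 hp1 hb hx)
  have key : (b - b) ^ 2 / 2 - twoPtEntropy p (b ^ 2) (b ^ 2)
      ≤ (a - b) ^ 2 / 2 - twoPtEntropy p (a ^ 2) (b ^ 2) := hg Set.self_mem_Ici hba hba
  rw [sub_self, twoPtEntropy_self] at key
  linarith

theorem twoPtEntropy_sq_le {p : ℝ} (hp : p ∈ Set.Ioo (0 : ℝ) 1) (a b : ℝ) :
    twoPtEntropy p (a ^ 2) (b ^ 2) ≤ (a - b) ^ 2 / 2 := by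
  rw [← sq_abs a, ← sq_abs b]
  have habs : (|a| - |b|) ^ 2 ≤ (a - b) ^ 2 := sq_le_sq.2 (abs_abs_sub_abs_le_abs_sub a b)
  rcases le_total |b| |a| with h | h
  · linarith [twoPtEntropy_sq_le_of_le hp.1 hp.2.le (abs_nonneg b) h]
  · rw [← twoPtEntropy_one_sub]
    linarith [twoPtEntropy_sq_le_of_le (sub_pos.2 hp.2) (by linarith [hp.1]) (abs_nonneg a) h,
      sub_sq_comm |a| |b|]

theorem neg_twoPtExp_mul_twoPtL (p : ℝ) (g : Bool → ℝ) :
    -twoPtExp p (fun x => g x * twoPtL p g x) = p * (1 - p) * (g true - g false) ^ 2 := by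
  simp only [twoPtL, twoPtExp]
  ring

theorem stmt6_general (p : ℝ) (hp : p ∈ Set.Ioo (0:ℝ) 1) (f : Bool → ℝ) :
    twoPtExp p (fun x => f x ^ 2 * Real.log (f x ^ 2))
      - twoPtExp p (fun x => f x ^ 2) * Real.log (twoPtExp p (fun x => f x ^ 2))
      ≤ -(1 / (2 * p * (1 - p))) * twoPtExp p (fun x => f x * twoPtL p f x) := by
  have hq : 1 - p ≠ 0 := (sub_pos.2 hp.2).ne'
  rw [neg_mul, ← mul_neg, neg_twoPtExp_mul_twoPtL,
    show 1 / (2 * p * (1 - p)) * (p * (1 - p) * (f true - f false) ^ 2)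
      = (f true - f false) ^ 2 / 2 by field_simp [hp.1.ne', hq]]
  exact twoPtEntropy_sq_le hp (f true) (f false)

theorem stmt6 (p : ℝ) (hp : p ∈ Set.Ioo (0:ℝ) 1) (f : Bool → ℝ) (hf : ∀ x, 0 ≤ f x) :
    twoPtExp p (fun x => f x ^ 2 * Real.log (f x ^ 2))
      - twoPtExp p (fun x => f x ^ 2) * Real.log (twoPtExp p (fun x => f x ^ 2))
      ≤ -(1 / (2 * p * (1 - p))) * twoPtExp p (fun x => f x * twoPtL p f x) :=
  stmt6_general p hp f
end

section
/- Fix p ∈ (0,1) and suppose W := Σ_{j=1}^n Inf_j(f)² satisfies V := Var(f) ≥ √W and V ≥ 100 W with W < 1/100. Then choosing ε = 1/log(V/W) ∈ (0,1), one has (1 - (V/W)^{ε/(ε-2)})/√ε ≥ C √(log(1 + e/W)) for a universal constant C > 0. -/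
open Real

theorem stmt18 :
    ∃ C > 0, ∀ V W : ℝ, 0 < W → W < 1/100 → Real.sqrt W ≤ V → 100 * W ≤ V → V ≤ 1 →
      (1 / Real.log (V / W) ∈ Set.Ioo (0:ℝ) 1)
      ∧ C * Real.sqrt (Real.log (1 + Real.exp 1 / W))
          ≤ (1 - (V / W) ^ ((1 / Real.log (V / W)) / (1 / Real.log (V / W) - 2)))
            / Real.sqrt (1 / Real.log (V / W)) := by
  refine ⟨1/10, by norm_num, ?_⟩
  intro V W hW hW' hsq h100 hV1
  have hV : 0 < V := lt_of_lt_of_le (by positivity) h100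
  have hVW : (100:ℝ) ≤ V / W := (le_div_iff₀ hW).mpr (by linarith)
  have hVW0 : 0 < V / W := by positivity
  have he1 : Real.exp 1 < 2.7182818286 := Real.exp_one_lt_d9
  have he2 : Real.exp 2 ≤ 100 := by
    have h : Real.exp 2 = Real.exp 1 * Real.exp 1 := by
      rw [← Real.exp_add]; norm_num
    nlinarith [Real.exp_pos 1]
  set L := Real.log (V / W) with hLdef
  have hL2 : (2:ℝ) ≤ L := by
    have := Real.log_le_log (Real.exp_pos 2) (he2.trans hVW)
    rwa [Real.log_exp] at this
  have hL0 : (0:ℝ) < L := by linarith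
  have hmem : 1 / L ∈ Set.Ioo (0:ℝ) 1 := by
    constructor
    · positivity
    · rw [div_lt_one hL0]; linarith
  refine ⟨hmem, ?_⟩
  -- exponent bound
  set a := (1 / L) / (1 / L - 2) with hadef
  have hd : 1 / L - 2 < 0 := by
    have : 1 / L ≤ 1 / 2 := by
      rw [div_le_div_iff₀ hL0 (by norm_num)]; linarith
    linarith
  have hd2 : -2 ≤ 1 / L - 2 := by
    have : 0 < 1 / L := by positivity
    linarith
  have hLa : L * a = 1 / (1 / L - 2) := by
    rw [hadef]; field_simp
  have hLa_le : L * a ≤ -1/2 := by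
    rw [hLa, div_le_iff_of_neg hd]; linarith
  have hrpow : (V / W) ^ a = Real.exp (L * a) := by
    rw [Real.rpow_def_of_pos hVW0]
  have hexp_half : (3:ℝ)/2 ≤ Real.exp (1/2) := by
    have := Real.add_one_le_exp (1/2 : ℝ)
    linarith
  have hexp_le : Real.exp (L * a) ≤ 2/3 := by
    have h1 : Real.exp (L * a) ≤ Real.exp (-1/2) := Real.exp_le_exp.mpr hLa_le
    have h2 : Real.exp (-1/2 : ℝ) = (Real.exp (1/2))⁻¹ := by
      rw [← Real.exp_neg]; norm_num
    have h3 : (Real.exp (1/2))⁻¹ ≤ (3/2 : ℝ)⁻¹ :=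
      inv_anti₀ (by norm_num) hexp_half
    calc Real.exp (L * a) ≤ (Real.exp (1/2))⁻¹ := h2 ▸ h1
      _ ≤ (3/2 : ℝ)⁻¹ := h3
      _ = 2/3 := by norm_num
  have hnum : (1:ℝ)/3 ≤ 1 - (V / W) ^ a := by
    rw [hrpow]; linarith
  -- log bound: log(1 + e/W) ≤ 4 L
  have hx2 : (2:ℝ) ≤ -Real.log W := by
    have h1 : Real.log W < Real.log (1/100) := Real.log_lt_log hW hW'
    have h2 : Real.log (1/100 : ℝ) = -Real.log 100 := by
      rw [Real.log_div one_ne_zero (by norm_num), Real.log_one]; ring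
    have h3 : (2:ℝ) ≤ Real.log 100 := by
      have := Real.log_le_log (Real.exp_pos 2) he2
      rwa [Real.log_exp] at this
    linarith
  have hLhalf : -Real.log W / 2 ≤ L := by
    have hsw : Real.sqrt W / W ≤ V / W := by
      apply div_le_div_of_nonneg_right hsq hW.le
    have h1 : Real.log (Real.sqrt W / W) ≤ L := by
      apply Real.log_le_log (by positivity) hsw
    have h2 : Real.log (Real.sqrt W / W) = -Real.log W / 2 := by
      rw [Real.log_div (by positivity) (ne_of_gt hW), Real.log_sqrt hW.le]
      ring
    linarith [h2 ▸ h1]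
  have hlogW : Real.log (1 + Real.exp 1 / W) ≤ 4 * L := by
    have h1 : (1:ℝ) + Real.exp 1 / W ≤ (1 + Real.exp 1) / W := by
      rw [add_div]
      have : (1:ℝ) ≤ 1 / W := by
        rw [le_div_iff₀ hW]; linarith
      linarith
    have h2 : Real.log (1 + Real.exp 1 / W) ≤ Real.log ((1 + Real.exp 1) / W) :=
      Real.log_le_log (by positivity) h1
    have h3 : Real.log ((1 + Real.exp 1) / W)
        = Real.log (1 + Real.exp 1) - Real.log W := by
      rw [Real.log_div (by positivity) (ne_of_gt hW)]
    have h4 : Real.log (1 + Real.exp 1) ≤ 2 := by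
      have : (1:ℝ) + Real.exp 1 ≤ Real.exp 2 := by
        have hm : Real.exp 2 = Real.exp 1 * Real.exp 1 := by
          rw [← Real.exp_add]; norm_num
        have hg : (2.7182818283:ℝ) < Real.exp 1 := Real.exp_one_gt_d9
        nlinarith
      have := Real.log_le_log (by positivity) this
      rwa [Real.log_exp] at this
    nlinarith
  -- put it together
  have hsL : Real.sqrt (Real.log (1 + Real.exp 1 / W)) ≤ 2 * Real.sqrt L := by
    have : Real.sqrt (Real.log (1 + Real.exp 1 / W)) ≤ Real.sqrt (4 * L) :=
      Real.sqrt_le_sqrt hlogW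
    rwa [show (4:ℝ) * L = 2^2 * L by ring, Real.sqrt_mul (by positivity),
      Real.sqrt_sq (by norm_num)] at this
  have hsqrtden : Real.sqrt (1 / L) = 1 / Real.sqrt L := by
    rw [one_div, one_div, Real.sqrt_inv]
  have hsL0 : 0 < Real.sqrt L := Real.sqrt_pos.mpr hL0
  rw [hsqrtden, div_div_eq_mul_div, div_one]
  calc 1/10 * Real.sqrt (Real.log (1 + Real.exp 1 / W))
      ≤ 1/10 * (2 * Real.sqrt L) := by
        have := mul_le_mul_of_nonneg_left hsL (by norm_num : (0:ℝ) ≤ 1/10)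
        linarith
    _ ≤ 1/3 * Real.sqrt L := by linarith [hsL0.le]
    _ ≤ (1 - (V / W) ^ a) * Real.sqrt L :=
        mul_le_mul_of_nonneg_right hnum (Real.sqrt_nonneg L)
end
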